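/- arXiv:1407.0920 — 2 statements merged into one kernel-verified Lean document; each statement's English description precedes it below -/
import Mathlib

section
/- Let n ≥ 1 and let A be a real n×n matrix possessing the strong Perron–Frobenius property. Then for every positive integer p, the matrix A^p possesses the strong Perron–Frobenius property. -/
open Polynomial Matrix

/-- The spectral radius of a real matrix: the maximum of the moduli of the complex
roots of its characteristic polynomial. -/
noncomputable def specRadius {n : ℕ} (A : Matrix (Fin n) (Fin n) ℝ) : ℝ :=
  (((A.charpoly.map (algebraMap ℝ ℂ)).roots.map (fun z => ‖z‖₊)).sup : NNReal)

/-- The strong Perron–Frobenius property for a real matrix. -/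
def HasStrongPF {n : ℕ} (A : Matrix (Fin n) (Fin n) ℝ) : Prop :=
  0 < specRadius A ∧
  (A.charpoly.map (algebraMap ℝ ℂ)).rootMultiplicity (specRadius A : ℂ) = 1 ∧
  (∃ x : Fin n → ℝ, (∀ i, 0 < x i) ∧ A.mulVec x = (specRadius A) • x) ∧
  (∀ μ ∈ (A.charpoly.map (algebraMap ℝ ℂ)).roots,
      μ ≠ (specRadius A : ℂ) → ‖μ‖ < specRadius A)

/-- Eventual positivity of a real matrix. -/
def EventuallyPos {n : ℕ} (A : Matrix (Fin n) (Fin n) ℝ) : Prop :=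
  ∃ p : ℕ, ∀ k ≥ p, ∀ i j, 0 < (A ^ k) i j

/-!
Over an algebraically closed field, `det (q B) = ∏ q μ` over the eigenvalues `μ` of `B` counted
with multiplicity (split `q` into linear factors, each of which is a shifted characteristic
polynomial). Applied to `q = y - X ^ p` this shows that the complex eigenvalues of `A ^ p` are
exactly the `p`-th powers of those of `A`, with multiplicities. As `t ↦ t ^ p` is strictly
increasing on moduli, `ρ ^ p` is the spectral radius of `A ^ p`, every other eigenvalue `μ ^ p`
has modulus `< ρ ^ p`, and only `μ = ρ` is sent to `ρ ^ p`, so its multiplicity stays `1`.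
A positive `ρ`-eigenvector of `A` is a positive `ρ ^ p`-eigenvector of `A ^ p`.
-/

namespace Matrix

theorem aeval_C_sub {R ι : Type*} [CommRing R] [Fintype ι] [DecidableEq ι] (B : Matrix ι ι R)
    (q : R[X]) (y : R) : aeval B (C y - q) = scalar ι y - aeval B q := by
  simp [algebraMap_eq_diagonal, scalar_apply]

variable {K : Type*} [Field K] [IsAlgClosed K] {ι : Type*} [Fintype ι] [DecidableEq ι]

theorem card_roots_charpoly (B : Matrix ι ι K) :
    Multiset.card B.charpoly.roots = Fintype.card ι := by
  rw [splits_iff_card_roots.mp (IsAlgClosed.splits B.charpoly), charpoly_natDegree_eq_dim]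

theorem det_sub_scalar_eq_prod_roots_charpoly (B : Matrix ι ι K) (z : K) :
    (B - scalar ι z).det = (B.charpoly.roots.map (· - z)).prod := by
  rw [← neg_sub, det_neg, ← eval_charpoly,
    (IsAlgClosed.splits B.charpoly).eval_eq_prod_roots_of_monic B.charpoly_monic,
    ← card_roots_charpoly B, ← Multiset.card_map (z - ·), ← Multiset.prod_map_neg,
    Multiset.map_map]
  simp

theorem det_aeval_eq_prod_roots_charpoly (B : Matrix ι ι K) (q : K[X]) :
    (aeval B q).det = (B.charpoly.roots.map q.eval).prod := by
  let φ : K[X] →* K := detMonoidHom.comp (aeval B).toMonoidHom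
  have hφ : ∀ q, φ q = (aeval B q).det := fun _ => rfl
  have hC : ∀ a, φ (C a) = a ^ Fintype.card ι := fun a => by
    simp [hφ, algebraMap_eq_diagonal, det_diagonal]
  have hX_sub_C : ∀ z, φ (X - C z) = (B.charpoly.roots.map (· - z)).prod := fun z => by
    rw [← det_sub_scalar_eq_prod_roots_charpoly, hφ, ← neg_sub, map_neg, aeval_C_sub, aeval_X,
      neg_sub]
  rw [← hφ, (IsAlgClosed.splits q).eq_prod_roots, map_mul, map_multiset_prod, Multiset.map_map]
  simp only [Function.comp_def, hC, hX_sub_C, eval_mul, eval_C, eval_multiset_prod,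
    Multiset.map_map, eval_sub, eval_X]
  rw [Multiset.prod_map_prod_map, Multiset.prod_map_mul, Multiset.map_const',
    Multiset.prod_replicate, card_roots_charpoly]

theorem charpoly_aeval_eq_prod (B : Matrix ι ι K) (q : K[X]) :
    (aeval B q).charpoly = (B.charpoly.roots.map fun μ => X - C (q.eval μ)).prod := by
  refine Polynomial.funext fun y => ?_
  rw [eval_charpoly, ← aeval_C_sub, det_aeval_eq_prod_roots_charpoly, eval_multiset_prod,
    Multiset.map_map]
  simp

theorem roots_charpoly_aeval (B : Matrix ι ι K) (q : K[X]) :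
    (aeval B q).charpoly.roots = B.charpoly.roots.map q.eval := by
  simpa [charpoly_aeval_eq_prod, Multiset.map_map, Function.comp_def] using
    roots_multiset_prod_X_sub_C (B.charpoly.roots.map q.eval)

theorem roots_charpoly_map_pow {R : Type*} [CommRing R] [Algebra R K] (A : Matrix ι ι R) (p : ℕ) :
    ((A ^ p).charpoly.map (algebraMap R K)).roots =
      (A.charpoly.map (algebraMap R K)).roots.map (· ^ p) := by
  simpa [← charpoly_map, Matrix.map_pow] using roots_charpoly_aeval (A.map (algebraMap R K)) (X ^ p)

end Matrix

theorem Monotone.multiset_sup_map {α β : Type*} [LinearOrder α] [OrderBot α] [LinearOrder β]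
    [OrderBot β] {f : α → β} (hf : Monotone f) (hf_bot : f ⊥ = ⊥) (s : Multiset α) :
    (s.map f).sup = f s.sup := by
  induction s using Multiset.induction with
  | empty => simp [hf_bot]
  | cons a s ih => simp [ih, hf.map_max]

namespace Multiset

variable {s : Multiset ℂ} {r : ℝ}

theorem norm_lt_of_mem_map_pow (hdom : ∀ μ ∈ s, μ ≠ r → ‖μ‖ < r) {p : ℕ}
    (hp : p ≠ 0) : ∀ ν ∈ s.map (· ^ p), ν ≠ (r : ℂ) ^ p → ‖ν‖ < r ^ p := by
  intro ν hν hne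
  obtain ⟨μ, hμ, rfl⟩ := mem_map.mp hν
  rw [norm_pow]
  exact pow_lt_pow_left₀ (hdom μ hμ fun h => hne (by rw [h])) (norm_nonneg μ) hp

theorem count_map_pow (hr : 0 ≤ r) (hdom : ∀ μ ∈ s, μ ≠ r → ‖μ‖ < r) {p : ℕ} (hp : p ≠ 0) :
    (s.map (· ^ p)).count ((r : ℂ) ^ p) = s.count (r : ℂ) := by
  have hpow_eq : ∀ μ ∈ s, (r : ℂ) ^ p = μ ^ p ↔ (r : ℂ) = μ := fun μ hμ => by
    refine ⟨fun h => ?_, fun h => h ▸ rfl⟩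
    by_contra hne
    have := congrArg norm h
    simp only [norm_pow, Complex.norm_real, Real.norm_of_nonneg hr] at this
    exact (pow_lt_pow_left₀ (hdom μ hμ (Ne.symm hne)) (norm_nonneg μ) hp).ne' this
  rw [count_map, filter_congr hpow_eq, ← count_eq_card_filter_eq]

end Multiset

theorem Matrix.mulVec_pow_of_mulVec_eq_smul {R ι : Type*} [CommSemiring R] [Fintype ι]
    [DecidableEq ι] {A : Matrix ι ι R} {x : ι → R} {c : R} (h : A *ᵥ x = c • x) (p : ℕ) :
    (A ^ p) *ᵥ x = c ^ p • x := by
  induction p with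
  | zero => simp
  | succ k ih => rw [pow_succ, ← mulVec_mulVec, h, mulVec_smul, ih, smul_smul, ← pow_succ']

theorem specRadius_pow {n : ℕ} (A : Matrix (Fin n) (Fin n) ℝ) {p : ℕ} (hp : p ≠ 0) :
    specRadius (A ^ p) = specRadius A ^ p := by
  have hmono : Monotone fun a : NNReal => a ^ p := fun _ _ h => pow_le_pow_left₀ zero_le h p
  have := hmono.multiset_sup_map (zero_pow hp)
    ((A.charpoly.map (algebraMap ℝ ℂ)).roots.map (‖·‖₊))
  simpa [specRadius, roots_charpoly_map_pow, Multiset.map_map, Function.comp_def] using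
    congrArg NNReal.toReal this

theorem strongPF_pow_general {n : ℕ} (A : Matrix (Fin n) (Fin n) ℝ)
    (hA : HasStrongPF A) (p : ℕ) (hp : 0 < p) :
    HasStrongPF (A ^ p) := by
  obtain ⟨hρ, hmult, ⟨x, hx, hAx⟩, hdom⟩ := hA
  have hp0 := hp.ne'
  refine ⟨?_, ?_, ⟨x, hx, ?_⟩, ?_⟩ <;> rw [specRadius_pow A hp0]
  · positivity
  · rw [Complex.ofReal_pow, ← count_roots, roots_charpoly_map_pow,
      Multiset.count_map_pow hρ.le hdom hp0, count_roots, hmult]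
  · exact mulVec_pow_of_mulVec_eq_smul hAx p
  · rw [roots_charpoly_map_pow, Complex.ofReal_pow]
    exact Multiset.norm_lt_of_mem_map_pow hdom hp0

/-- Positive integer powers preserve the strong Perron–Frobenius property. -/
theorem strongPF_pow {n : ℕ} (hn : 1 ≤ n) (A : Matrix (Fin n) (Fin n) ℝ)
    (hA : HasStrongPF A) (p : ℕ) (hp : 0 < p) :
    HasStrongPF (A ^ p) :=
  strongPF_pow_general A hA p hp
end

section
/- Let n ≥ 1 and let A be a real n×n matrix possessing the strong Perron–Frobenius property. Then the matrix exponential exp(A) possesses the strong Perron–Frobenius property. -/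
/-!
Over `ℂ`, the subalgebra generated by a matrix `M` is finite-dimensional, hence closed, so
`exp M = p(M)` for some polynomial `p`; evaluating on eigenvectors gives `p λ = exp λ` for every
eigenvalue `λ`. Since `det (p(M)) = ∏ p(λ)` over the eigenvalues counted with multiplicity, the
eigenvalues of `exp A` are the `exp λ`, with multiplicity. As `‖exp λ‖ = exp (re λ) ≤ exp ‖λ‖`,
the simple, strictly dominant eigenvalue `ρ` of `A` yields the simple, strictly dominant eigenvalue
`exp ρ` of `exp A`, and the positive eigenvector of `A` for `ρ` is one of `exp A` for `exp ρ`.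
-/

open Polynomial Matrix

namespace Matrix

section CommRing

variable {n R : Type*} [Fintype n] [DecidableEq n] [CommRing R]
  {M : Matrix n n R} {v : n → R} {c : R}

theorem pow_mulVec_of_mulVec_eq_smul (h : M *ᵥ v = c • v) (k : ℕ) :
    (M ^ k) *ᵥ v = c ^ k • v := by
  induction k with
  | zero => simp
  | succ k ih => rw [pow_succ', ← mulVec_mulVec, ih, mulVec_smul, h, smul_smul, pow_succ]

theorem aeval_mulVec_of_mulVec_eq_smul (h : M *ᵥ v = c • v) (p : R[X]) :
    aeval M p *ᵥ v = p.eval c • v := by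
  induction p using Polynomial.induction_on' with
  | add p q hp hq => rw [map_add, add_mulVec, hp, hq, eval_add, add_smul]
  | monomial k a =>
    rw [aeval_monomial, ← Algebra.smul_def, smul_mulVec, pow_mulVec_of_mulVec_eq_smul h,
      eval_monomial, smul_smul]

end CommRing

section IsAlgClosed

variable {n K : Type*} [Fintype n] [DecidableEq n] [Field K] [IsAlgClosed K]

theorem card_roots_charpoly_s7 (M : Matrix n n K) :
    Multiset.card M.charpoly.roots = Fintype.card n := by
  rw [splits_iff_card_roots.mp (IsAlgClosed.splits _), charpoly_natDegree_eq_dim]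

theorem det_sub_scalar_eq_prod_roots (M : Matrix n n K) (a : K) :
    (M - scalar n a).det = (M.charpoly.roots.map (· - a)).prod := by
  rw [← neg_sub, det_neg, ← eval_charpoly,
    (IsAlgClosed.splits M.charpoly).eval_eq_prod_roots_of_monic M.charpoly_monic,
    ← card_roots_charpoly_s7 M, ← Multiset.card_map (a - ·), ← Multiset.prod_map_neg, Multiset.map_map]
  simp

theorem det_aeval_eq_prod_roots (M : Matrix n n K) (q : K[X]) :
    (aeval M q).det = (M.charpoly.roots.map q.eval).prod := by
  -- both sides are multiplicative in `q`, and `q` is a product of linear factors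
  let φ : K[X] →* K := detMonoidHom.comp (aeval M : K[X] →ₐ[K] Matrix n n K).toMonoidHom
  let ψ : K[X] →* K :=
    { toFun := fun q => (M.charpoly.roots.map q.eval).prod
      map_one' := by simp
      map_mul' := fun p q => by simp [Multiset.prod_map_mul] }
  have hC : ∀ a, φ (C a) = ψ (C a) := fun a => by
    simp [φ, ψ, algebraMap_eq_diagonal, card_roots_charpoly_s7]
  have hX : ∀ a, φ (X - C a) = ψ (X - C a) := fun a => by
    simpa [φ, ψ, algebraMap_eq_diagonal, Pi.algebraMap_def] using det_sub_scalar_eq_prod_roots M a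
  change φ q = ψ q
  rw [(IsAlgClosed.splits q).eq_prod_roots, map_mul, map_mul, map_multiset_prod, map_multiset_prod,
    hC, Multiset.map_map, Multiset.map_map]
  congr 3
  exact funext hX

theorem charpoly_aeval_eq_prod_s7 (M : Matrix n n K) (p : K[X]) :
    (aeval M p).charpoly = (M.charpoly.roots.map fun l => X - C (p.eval l)).prod := by
  refine Polynomial.funext fun z => ?_
  have hscalar : scalar n z - aeval M p = aeval M (C z - p) := by
    rw [map_sub, aeval_C, algebraMap_eq_diagonal, Pi.algebraMap_def, scalar_apply]
    rfl
  rw [eval_charpoly, hscalar, det_aeval_eq_prod_roots, eval_multiset_prod, Multiset.map_map]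
  simp

theorem roots_charpoly_aeval_s7 (M : Matrix n n K) (p : K[X]) :
    (aeval M p).charpoly.roots = M.charpoly.roots.map p.eval := by
  simpa [charpoly_aeval_eq_prod_s7, Function.comp_def] using
    roots_multiset_prod_X_sub_C (M.charpoly.roots.map p.eval)

end IsAlgClosed

theorem exists_mulVec_eq_smul_of_isRoot_charpoly {n K : Type*} [Fintype n] [DecidableEq n]
    [Field K] {M : Matrix n n K} {l : K} (h : M.charpoly.IsRoot l) :
    ∃ v ≠ 0, M *ᵥ v = l • v := by
  rw [IsRoot, eval_charpoly, ← exists_mulVec_eq_zero_iff] at h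
  obtain ⟨v, hv0, hv⟩ := h
  refine ⟨v, hv0, ?_⟩
  rwa [sub_mulVec, scalar_apply, diagonal_const_mulVec, sub_eq_zero, eq_comm] at hv

section Exp

open NormedSpace Filter

variable {n 𝕂 : Type*} [Fintype n] [DecidableEq n] [RCLike 𝕂]

open scoped Matrix.Norms.Operator in
theorem exp_mulVec_of_mulVec_eq_smul {M : Matrix n n 𝕂} {v : n → 𝕂} {c : 𝕂}
    (h : M *ᵥ v = c • v) : exp M *ᵥ v = exp c • v := by
  have hM := ((continuous_id.matrix_mulVec (continuous_const (y := v))).tendsto _).comp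
    (exp_series_hasSum_exp' (𝕂 := 𝕂) M).tendsto_sum_nat
  have hc := ((exp_series_hasSum_exp' (𝕂 := 𝕂) c).smul_const v).tendsto_sum_nat
  refine tendsto_nhds_unique hM (hc.congr fun N => ?_)
  simp [sum_mulVec, smul_mulVec, pow_mulVec_of_mulVec_eq_smul h, smul_smul]

theorem exists_aeval_eq_exp (M : Matrix n n 𝕂) : ∃ p : 𝕂[X], aeval M p = exp M := by
  have hclosed : IsClosed (Algebra.adjoin 𝕂 {M} : Set (Matrix n n 𝕂)) :=
    (Algebra.adjoin 𝕂 {M}).toSubmodule.closed_of_finiteDimensional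
  have := exp_mem (R := 𝕂) hclosed (Algebra.self_mem_adjoin_singleton 𝕂 M)
  rwa [Algebra.adjoin_singleton_eq_range_aeval] at this

open scoped Matrix.Norms.Operator in
theorem exp_map_algebraMap (A : Matrix n n ℝ) :
    (exp A).map (algebraMap ℝ 𝕂) = exp (A.map (algebraMap ℝ 𝕂)) :=
  map_exp (algebraMap ℝ 𝕂).mapMatrix (continuous_id.matrix_map (continuous_algebraMap ℝ 𝕂)) A

theorem roots_charpoly_exp (M : Matrix n n ℂ) :
    (exp M).charpoly.roots = M.charpoly.roots.map Complex.exp := by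
  obtain ⟨p, hp⟩ := exists_aeval_eq_exp M
  rw [← hp, roots_charpoly_aeval_s7]
  refine Multiset.map_congr rfl fun l hl => ?_
  obtain ⟨v, hv0, hv⟩ := exists_mulVec_eq_smul_of_isRoot_charpoly (isRoot_of_mem_roots hl)
  have hpv := aeval_mulVec_of_mulVec_eq_smul hv p
  rw [hp, exp_mulVec_of_mulVec_eq_smul hv, ← Complex.exp_eq_exp_ℂ] at hpv
  exact smul_left_injective ℂ hv0 hpv.symm

theorem roots_charpoly_map_exp (A : Matrix n n ℝ) :
    ((exp A).charpoly.map (algebraMap ℝ ℂ)).roots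
      = (A.charpoly.map (algebraMap ℝ ℂ)).roots.map Complex.exp := by
  rw [← charpoly_map, exp_map_algebraMap, roots_charpoly_exp, charpoly_map]

end Exp

end Matrix

theorem Multiset.count_map_eq_count_of_map_eq_imp_eq {α β : Type*} [DecidableEq α]
    [DecidableEq β] {f : α → β} {s : Multiset α} {x : α} (h : ∀ y ∈ s, f y = f x → y = x) :
    (s.map f).count (f x) = s.count x := by
  rw [Multiset.count_map, Multiset.count_eq_card_filter_eq]
  congr 1
  exact Multiset.filter_congr fun y hy => ⟨fun hxy => (h y hy hxy.symm).symm, congrArg f⟩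

def IsSimpleDominant (S : Multiset ℂ) (r : ℝ) : Prop :=
  S.count (r : ℂ) = 1 ∧ ∀ μ ∈ S, μ ≠ r → ‖μ‖ < r

namespace IsSimpleDominant

variable {S : Multiset ℂ} {r : ℝ}

theorem coe_sup_map_nnnorm (h : IsSimpleDominant S r) (hr : 0 ≤ r) :
    ((S.map fun z => ‖z‖₊).sup : ℝ) = r := by
  have hmem : (r : ℂ) ∈ S := Multiset.count_pos.mp (h.1 ▸ one_pos)
  have hnorm : ‖(r : ℂ)‖ = r := by rw [Complex.norm_real, Real.norm_of_nonneg hr]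
  suffices (S.map fun z => ‖z‖₊).sup = ‖(r : ℂ)‖₊ by rw [this, coe_nnnorm, hnorm]
  refine le_antisymm (Multiset.sup_le.mpr ?_) (Multiset.le_sup (Multiset.mem_map_of_mem _ hmem))
  simp only [Multiset.mem_map, forall_exists_index, and_imp, forall_apply_eq_imp_iff₂]
  intro μ hμ
  rcases eq_or_ne μ r with rfl | hne
  · exact le_rfl
  · rw [← NNReal.coe_le_coe, coe_nnnorm, coe_nnnorm, hnorm]
    exact (h.2 μ hμ hne).le

theorem map_exp (h : IsSimpleDominant S r) :
    IsSimpleDominant (S.map Complex.exp) (Real.exp r) := by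
  have hlt : ∀ μ ∈ S, μ ≠ r → ‖Complex.exp μ‖ < Real.exp r := fun μ hμ hne => by
    rw [Complex.norm_exp, Real.exp_lt_exp]
    exact (Complex.re_le_norm μ).trans_lt (h.2 μ hμ hne)
  refine ⟨?_, ?_⟩
  · rw [Complex.ofReal_exp, Multiset.count_map_eq_count_of_map_eq_imp_eq, h.1]
    intro μ hμ hexp
    by_contra hne
    simpa [hexp, Complex.norm_exp] using hlt μ hμ hne
  · simp only [Multiset.mem_map, forall_exists_index, and_imp, forall_apply_eq_imp_iff₂]
    intro μ hμ hne
    exact hlt μ hμ fun hμr => hne (by rw [hμr, Complex.ofReal_exp])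

end IsSimpleDominant

theorem strongPF_exp_general {n : ℕ} (A : Matrix (Fin n) (Fin n) ℝ)
    (hA : HasStrongPF A) :
    HasStrongPF (NormedSpace.exp A) := by
  obtain ⟨-, hsimple, ⟨x, hx_pos, hx⟩, hdom⟩ := hA
  have hS : IsSimpleDominant (A.charpoly.map (algebraMap ℝ ℂ)).roots (specRadius A) :=
    ⟨by rw [count_roots, hsimple], hdom⟩
  have hS_exp : IsSimpleDominant ((NormedSpace.exp A).charpoly.map (algebraMap ℝ ℂ)).roots
      (Real.exp (specRadius A)) := by
    rw [Matrix.roots_charpoly_map_exp]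
    exact hS.map_exp
  have hspec : specRadius (NormedSpace.exp A) = Real.exp (specRadius A) :=
    hS_exp.coe_sup_map_nnnorm (Real.exp_pos _).le
  refine ⟨hspec ▸ Real.exp_pos _, ?_, ⟨x, hx_pos, ?_⟩, hspec ▸ hS_exp.2⟩
  · rw [hspec, ← count_roots, hS_exp.1]
  · rw [hspec, Real.exp_eq_exp_ℝ]
    exact Matrix.exp_mulVec_of_mulVec_eq_smul hx

/-- The matrix exponential preserves the strong Perron–Frobenius property. -/
theorem strongPF_exp {n : ℕ} (hn : 1 ≤ n) (A : Matrix (Fin n) (Fin n) ℝ)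
    (hA : HasStrongPF A) :
    HasStrongPF (NormedSpace.exp A) :=
  strongPF_exp_general A hA
end
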